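/- arXiv:2002.12480 — 2 statements merged into one kernel-verified Lean document; each statement's English description precedes it below -/
import Mathlib

section
/- Let X be a Hausdorff topological space and let Γ be a finite abelian group acting on X such that for each g ∈ Γ the map x ↦ g • x is continuous. Let H be a subgroup of Γ and let X_H = {x ∈ X : for every g ∈ Γ, g • x = x implies g ∈ H}. Then X_H is Γ-invariant (for all g ∈ Γ and x ∈ X_H, g • x ∈ X_H), and the image of X_H under the quotient map X → X/Γ to the orbit space (with the quotient topology) is open in X/Γ. -/
/-- Let `X` be a Hausdorff topological space and `Γ` a finite abelian group acting on `X`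
with continuous translations.  For a subgroup `H ≤ Γ`, the set
`X_H = {x | stabilizer of x ⊆ H}` is `Γ`-invariant, and its image in the orbit space
`X/Γ` (with the quotient topology) is open. -/
theorem stabilizer_in_subgroup_invariant_and_image_isOpen
    {X Γ : Type*} [TopologicalSpace X] [T2Space X] [CommGroup Γ] [Finite Γ]
    [MulAction Γ X] (hcont : ∀ g : Γ, Continuous fun x : X => g • x)
    (H : Subgroup Γ) :
    (∀ (g : Γ) (x : X), x ∈ {x : X | ∀ g' : Γ, g' • x = x → g' ∈ H} →
        g • x ∈ {x : X | ∀ g' : Γ, g' • x = x → g' ∈ H}) ∧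
    IsOpen (Quotient.mk (MulAction.orbitRel Γ X) ''
        {x : X | ∀ g : Γ, g • x = x → g ∈ H}) := by
  set S : Set X := {x : X | ∀ g' : Γ, g' • x = x → g' ∈ H} with hSdef
  have hinv : ∀ (g : Γ) (x : X), x ∈ S → g • x ∈ S := by
    intro g x hx g' hg'
    apply hx
    have h1 : g • g' • x = g • x := by rw [smul_comm]; exact hg'
    exact smul_left_cancel g h1
  have hopen : IsOpen S := by
    rw [← isClosed_compl_iff]
    have : Sᶜ = ⋃ g ∈ {g : Γ | g ∉ H}, {x : X | g • x = x} := by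
      ext x
      simp only [hSdef, Set.mem_compl_iff, Set.mem_setOf_eq, Set.mem_iUnion]
      push_neg
      tauto
    rw [this]
    refine Set.Finite.isClosed_biUnion (Set.toFinite _) ?_
    intro g _
    exact isClosed_eq (hcont g) continuous_id
  refine ⟨hinv, ?_⟩
  have hpre : Quotient.mk (MulAction.orbitRel Γ X) ⁻¹'
      (Quotient.mk (MulAction.orbitRel Γ X) '' S) = S := by
    ext x
    constructor
    · rintro ⟨y, hy, h⟩
      have hrel : (MulAction.orbitRel Γ X).r y x := Quotient.exact h
      obtain ⟨g, rfl⟩ := hrel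
      have := hinv g⁻¹ _ hy
      rwa [inv_smul_smul] at this
    · intro hx
      exact ⟨x, hx, rfl⟩
  rw [show (Quotient.mk (MulAction.orbitRel Γ X) ''
      {x : X | ∀ g : Γ, g • x = x → g ∈ H}) =
      Quotient.mk (MulAction.orbitRel Γ X) '' S from rfl]
  rw [isOpen_coinduced (f := Quotient.mk (MulAction.orbitRel Γ X))] at *
  rw [hpre]
  exact hopen
end

section
/- Let n ≥ 2 and let c, k be integers with 1 ≤ c ≤ n−1 and 1 ≤ k ≤ n−1. Set r = n / gcd(n, c), and define the rational number a = c(n−k)/n if c ≤ k, and a = k(n−c)/n if c > k. Then a is an integer if and only if k is a multiple of r. In particular, a is nonzero (i.e., α_c occurs in μ_k) if and only if k is not a multiple of r. -/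
/-!
Writing `a = min c k - c k / n`, the coefficient `a` is an integer exactly when `n ∣ c k`.
Dividing out `g = gcd n c` turns this into `n / g ∣ (c / g) k`, and since `n / g` and `c / g`
are coprime, into `n / g ∣ k`.
-/

open Set

theorem Nat.dvd_mul_right_iff_div_gcd_dvd {n : ℕ} (c k : ℕ) (hn : 0 < n) :
    n ∣ c * k ↔ n / n.gcd c ∣ k := by
  have hg : 0 < n.gcd c := Nat.gcd_pos_of_pos_left c hn
  calc n ∣ c * k ↔ n.gcd c * (n / n.gcd c) ∣ n.gcd c * (c / n.gcd c * k) := by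
        rw [Nat.mul_div_cancel' (n.gcd_dvd_left c), ← mul_assoc,
          Nat.mul_div_cancel' (n.gcd_dvd_right c)]
    _ ↔ n / n.gcd c ∣ c / n.gcd c * k := Nat.mul_dvd_mul_iff_left hg
    _ ↔ n / n.gcd c ∣ k := (Nat.coprime_div_gcd_div_gcd hg).dvd_mul_left

theorem Rat.natCast_div_mem_range_intCast_iff {m n : ℕ} (hn : n ≠ 0) :
    (m : ℚ) / n ∈ range (Int.cast : ℤ → ℚ) ↔ n ∣ m := by
  constructor
  · rintro ⟨z, hz⟩
    rw [eq_div_iff (Nat.cast_ne_zero.mpr hn)] at hz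
    exact Int.natCast_dvd_natCast.mp ⟨z, by exact_mod_cast (hz.symm.trans (mul_comm _ _))⟩
  · rintro ⟨d, rfl⟩
    exact ⟨d, by push_cast; field_simp⟩

theorem intCast_sub_mem_range_intCast_iff {R : Type*} [Ring R] (m : ℤ) (b : R) :
    (m : R) - b ∈ range (Int.cast : ℤ → R) ↔ b ∈ range (Int.cast : ℤ → R) := by
  constructor
  · rintro ⟨z, hz⟩
    exact ⟨m - z, by push_cast; rw [hz, sub_sub_cancel]⟩
  · rintro ⟨z, rfl⟩
    exact ⟨m - z, by push_cast; rfl⟩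

/-- The coefficient `a_{ki}` of the simple root `α_i` in the fundamental weight `λ_k` of
type `A_{n-1}`. -/
def fundWeightCoeff (n k i : ℕ) : ℚ :=
  if i ≤ k then (i : ℚ) * ((n : ℚ) - (k : ℚ)) / (n : ℚ) else (k : ℚ) * ((n : ℚ) - (i : ℚ)) / (n : ℚ)

theorem fundWeightCoeff_eq_min_sub {n : ℕ} (k i : ℕ) (hn : n ≠ 0) :
    fundWeightCoeff n k i = ((min i k : ℤ) : ℚ) - ((i * k : ℕ) : ℚ) / n := by
  unfold fundWeightCoeff
  split_ifs with h
  · rw [min_eq_left (by exact_mod_cast h)]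
    push_cast
    field_simp
  · rw [min_eq_right (by exact_mod_cast (not_le.mp h).le)]
    push_cast
    field_simp

theorem fundWeightCoeff_mem_range_intCast_iff {n : ℕ} (k i : ℕ) (hn : 0 < n) :
    fundWeightCoeff n k i ∈ range (Int.cast : ℤ → ℚ) ↔ n / n.gcd i ∣ k := by
  rw [fundWeightCoeff_eq_min_sub k i hn.ne', intCast_sub_mem_range_intCast_iff,
    Rat.natCast_div_mem_range_intCast_iff hn.ne', Nat.dvd_mul_right_iff_div_gcd_dvd i k hn]

theorem simple_root_occurs_in_mu_iff_general
    (n c k : ℕ) (hn : 2 ≤ n) :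
    let r : ℕ := n / Nat.gcd n c
    let a : ℚ := if c ≤ k then ((c : ℚ) * ((n : ℚ) - (k : ℚ))) / (n : ℚ)
      else ((k : ℚ) * ((n : ℚ) - (c : ℚ))) / (n : ℚ)
    ((∃ m : ℤ, a = (m : ℚ)) ↔ r ∣ k) ∧ (Int.fract a ≠ 0 ↔ ¬ r ∣ k) := by
  intro r a
  have hint : a ∈ range (Int.cast : ℤ → ℚ) ↔ r ∣ k :=
    fundWeightCoeff_mem_range_intCast_iff k c (by omega)
  refine ⟨?_, by rw [Ne, Int.fract_eq_zero_iff, hint]⟩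
  simpa only [mem_range, eq_comm] using hint

/-- Let `n ≥ 2` and `1 ≤ c ≤ n-1`, `1 ≤ k ≤ n-1`.  Set `r = n / gcd(n, c)` and let
`a = c(n-k)/n` if `c ≤ k` and `a = k(n-c)/n` if `c > k` (the coefficient of the
simple root `α_c` in the fundamental weight `λ_k` of type `A_{n-1}`).  Then `a` is
an integer if and only if `r ∣ k`; in particular the fractional part of `a` (the
coefficient of `α_c` in `μ_k`) is nonzero if and only if `k` is not a multiple of
`r`. -/
theorem simple_root_occurs_in_mu_iff
    (n c k : ℕ) (hn : 2 ≤ n) (hc : 1 ≤ c ∧ c ≤ n - 1) (hk : 1 ≤ k ∧ k ≤ n - 1) :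
    let r : ℕ := n / Nat.gcd n c
    let a : ℚ := if c ≤ k then ((c : ℚ) * ((n : ℚ) - (k : ℚ))) / (n : ℚ)
      else ((k : ℚ) * ((n : ℚ) - (c : ℚ))) / (n : ℚ)
    ((∃ m : ℤ, a = (m : ℚ)) ↔ r ∣ k) ∧ (Int.fract a ≠ 0 ↔ ¬ r ∣ k) :=
  simple_root_occurs_in_mu_iff_general n c k hn
end
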